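/- arXiv:1305.6196 — 5 statements merged into one kernel-verified Lean document; each statement's English description precedes it below -/
import Mathlib

section
/- Let T be a tree. For every edge e of T, let p_1(e) and p_2(e) denote the numbers of pendent vertices of T lying in the two connected components of T - e. Then the terminal Wiener index of T satisfies TW(T) = Σ_{e ∈ E(T)} p_1(e)·p_2(e). -/
open Finset

/-- The pendent vertices of a graph: the vertices of degree 1. -/
def pendentFinset {V : Type*} [Fintype V] (G : SimpleGraph V) [DecidableRel G.Adj] : Finset V :=
  univ.filter (fun v => G.degree v = 1)

/-- The terminal Wiener index of a graph: the sum of the distances over all unordered pairs of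
pendent vertices, i.e. half of the sum over all ordered pairs of pendent vertices. -/
noncomputable def terminalWienerIndex {V : Type*} [Fintype V] (G : SimpleGraph V)
    [DecidableRel G.Adj] : ℕ :=
  (∑ u ∈ pendentFinset G, ∑ v ∈ pendentFinset G, G.dist u v) / 2

/-- The number of pendent vertices of `G` lying in the connected component of `u` in the graph
obtained from `G` by deleting the edge `s(u, v)`. -/
noncomputable def pendentSideCard {V : Type*} [Fintype V] (G : SimpleGraph V)
    [DecidableRel G.Adj] (u v : V) : ℕ :=
  Nat.card {w : V | G.degree w = 1 ∧ (G.deleteEdges {s(u, v)}).Reachable u w}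

/-- For an edge `e = s(u,v)`, the product `p₁(e) * p₂(e)` of the numbers of pendent vertices
lying in the two connected components obtained by deleting `e`. -/
noncomputable def edgePendentProd {V : Type*} [Fintype V] (G : SimpleGraph V)
    [DecidableRel G.Adj] : Sym2 V → ℕ :=
  Sym2.lift ⟨fun u v => pendentSideCard G u v * pendentSideCard G v u,
    fun u v => mul_comm _ _⟩

/-! In a tree, `d(u, v)` is the number of edges whose deletion separates `u` from `v`: these are
exactly the edges of the unique `u`–`v` path. Summing over ordered pairs of pendent vertices and
exchanging the sums, each edge `e` contributes the number of ordered pendent pairs it separates.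
As `e` is a bridge, every vertex of `T - e` lies on exactly one side of `e`, so this number is
`2 p₁(e) p₂(e)`. -/

theorem Finset.sum_sum_ite_iff_eq_two_mul_card_mul_card {α : Type*} (s : Finset α)
    (p : α → Prop) [DecidablePred p] :
    ∑ u ∈ s, ∑ v ∈ s, (if (p u ↔ p v) then 0 else 1) =
      2 * #(s.filter p) * #(s.filter (¬ p ·)) := by
  have hsplit : ∀ u v, (if (p u ↔ p v) then 0 else 1) =
      (if p u then 1 else 0) * (if ¬ p v then 1 else 0) +
        (if ¬ p u then 1 else 0) * (if p v then 1 else 0) := by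
    intro u v
    by_cases hu : p u <;> by_cases hv : p v <;> simp [hu, hv]
  simp only [hsplit, sum_add_distrib, ← sum_mul_sum, sum_boole, Nat.cast_id]
  ring

namespace SimpleGraph

variable {V : Type*} {G : SimpleGraph V} {a b u v w : V}

theorem Adj.reachable_deleteEdges_or (hab : G.Adj a b) (hw : G.Reachable w a) :
    (G.deleteEdges {s(a, b)}).Reachable w a ∨ (G.deleteEdges {s(a, b)}).Reachable w b := by
  classical
  obtain ⟨p, hp⟩ := hw.exists_isPath
  by_cases he : s(a, b) ∈ p.edges
  · have hb := p.snd_mem_support_of_mem_edges he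
    have ha := Walk.endpoint_notMem_support_takeUntil hp hb hab.ne
    -- `a` occurs on the path only at its end, so the prefix up to `b` avoids the edge
    refine .inr ⟨(p.takeUntil b hb).toDeleteEdges {s(a, b)} ?_⟩
    rintro e he' rfl
    exact ha ((p.takeUntil b hb).fst_mem_support_of_mem_edges he')
  · exact .inl ⟨p.toDeleteEdges {s(a, b)} fun _ h' h'' => he (h'' ▸ h')⟩

theorem Connected.reachable_deleteEdges_iff_not (hG : G.Connected) (hb : G.IsBridge s(a, b))
    (w : V) :
    (G.deleteEdges {s(a, b)}).Reachable a w ↔ ¬ (G.deleteEdges {s(a, b)}).Reachable b w := by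
  have hab : G.Adj a b := hb.reachable_iff_adj.mp (hG a b)
  refine ⟨fun ha hb' => isBridge_iff.mp hb (ha.trans hb'.symm), fun hnb => ?_⟩
  rcases hab.reachable_deleteEdges_or (hG w a) with ha | hb'
  · exact ha.symm
  · exact absurd hb'.symm hnb

theorem Connected.reachable_deleteEdges_iff (hG : G.Connected) (hb : G.IsBridge s(a, b))
    (u v : V) :
    (G.deleteEdges {s(a, b)}).Reachable u v ↔
      ((G.deleteEdges {s(a, b)}).Reachable a u ↔ (G.deleteEdges {s(a, b)}).Reachable a v) := by
  set G' := G.deleteEdges {s(a, b)}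
  have hside := hG.reachable_deleteEdges_iff_not hb
  constructor
  · intro huv
    exact ⟨fun hu => hu.trans huv, fun hv => hv.trans huv.symm⟩
  · intro h
    by_cases hu : G'.Reachable a u
    · exact hu.symm.trans (h.mp hu)
    · exact ((hside u).not_left.mp hu).symm.trans ((hside v).not_left.mp (mt h.mpr hu))

theorem IsAcyclic.reachable_deleteEdges_iff_notMem_edges (hG : G.IsAcyclic) {p : G.Walk u v}
    (hp : p.IsPath) (e : Sym2 V) :
    (G.deleteEdges {e}).Reachable u v ↔ e ∉ p.edges := by
  classical
  refine ⟨fun ⟨q⟩ he => ?_,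
    fun he => ⟨p.toDeleteEdges {e} fun _ h' h'' => he (h'' ▸ h')⟩⟩
  let r := (q.mapLe (G.deleteEdges_le {e})).toPath
  have hrp : (r : G.Walk u v) = p :=
    congrArg Subtype.val ((hG.subsingleton_path u v).elim r ⟨p, hp⟩)
  have hr : e ∈ (q.mapLe (G.deleteEdges_le {e})).edges :=
    Walk.edges_toPath_subset_edges _ (hrp ▸ he)
  rw [Walk.edges_mapLe_eq_edges] at hr
  simpa using q.edges_subset_edgeSet hr

theorem IsAcyclic.dist_eq_card_filter_not_reachable_deleteEdges [Fintype G.edgeSet]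
    [DecidablePred fun e => (G.deleteEdges {e}).Reachable u v] (hG : G.IsAcyclic)
    (huv : G.Reachable u v) :
    G.dist u v = #(G.edgeFinset.filter (fun e => ¬ (G.deleteEdges {e}).Reachable u v)) := by
  classical
  obtain ⟨p, hp, hlen⟩ := huv.exists_path_of_dist
  have hedges : G.edgeFinset.filter (fun e => ¬ (G.deleteEdges {e}).Reachable u v) =
      p.edges.toFinset := by
    ext e
    simp only [mem_filter, mem_edgeFinset, List.mem_toFinset,
      hG.reachable_deleteEdges_iff_notMem_edges hp, not_not]
    exact ⟨And.right, fun he => ⟨p.edges_subset_edgeSet he, he⟩⟩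
  rw [hedges, List.toFinset_card_of_nodup hp.isTrail.edges_nodup, Walk.length_edges, hlen]

theorem pendentSideCard_eq_card_filter [Fintype V] [DecidableRel G.Adj]
    [DecidablePred ((G.deleteEdges {s(u, v)}).Reachable u)] :
    pendentSideCard G u v =
      #((pendentFinset G).filter ((G.deleteEdges {s(u, v)}).Reachable u)) := by
  rw [pendentSideCard, Nat.card_coe_set_eq, ← Set.ncard_coe_finset]
  congr
  ext w
  simp [pendentFinset, and_comm]

theorem Connected.sum_sum_ite_reachable_deleteEdges (hG : G.Connected)
    (hb : G.IsBridge s(a, b)) [DecidableRel (G.deleteEdges {s(a, b)}).Reachable] (s : Finset V) :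
    ∑ u ∈ s, ∑ v ∈ s, (if (G.deleteEdges {s(a, b)}).Reachable u v then 0 else 1) =
      2 * #(s.filter ((G.deleteEdges {s(a, b)}).Reachable a)) *
        #(s.filter ((G.deleteEdges {s(a, b)}).Reachable b)) := by
  have hside : s.filter ((G.deleteEdges {s(a, b)}).Reachable b) =
      s.filter (¬ (G.deleteEdges {s(a, b)}).Reachable a ·) :=
    filter_congr fun w _ => by rw [hG.reachable_deleteEdges_iff_not hb, not_not]
  rw [hside, ← sum_sum_ite_iff_eq_two_mul_card_mul_card]
  exact sum_congr rfl fun u _ => sum_congr rfl fun v _ =>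
    if_congr (hG.reachable_deleteEdges_iff hb u v) rfl rfl

theorem IsTree.sum_sum_pendent_ite_reachable_deleteEdges [Fintype V] [DecidableRel G.Adj]
    [DecidableRel (G.deleteEdges {s(a, b)}).Reachable] (hG : G.IsTree) (hab : G.Adj a b) :
    ∑ u ∈ pendentFinset G, ∑ v ∈ pendentFinset G,
      (if (G.deleteEdges {s(a, b)}).Reachable u v then 0 else 1) =
      2 * edgePendentProd G s(a, b) := by
  have hb : G.IsBridge s(a, b) := isAcyclic_iff_forall_adj_isBridge.mp hG.isAcyclic hab
  classical
  rw [hG.connected.sum_sum_ite_reachable_deleteEdges hb, mul_assoc, edgePendentProd,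
    Sym2.lift_mk]
  dsimp only
  rw [pendentSideCard_eq_card_filter, pendentSideCard_eq_card_filter, Sym2.eq_swap (a := b)]
  -- the two sides now differ only in their `Decidable` instances
  congr

end SimpleGraph

theorem terminal_wiener_index_eq_sum_edge_pendent_prod_general {V : Type*} [Fintype V]
    (T : SimpleGraph V) [DecidableRel T.Adj] (hT : T.IsTree) :
    terminalWienerIndex T = ∑ e ∈ T.edgeFinset, edgePendentProd T e := by
  classical
  have hdist (u v : V) : T.dist u v =
      ∑ e ∈ T.edgeFinset, if (T.deleteEdges {e}).Reachable u v then 0 else 1 := by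
    rw [hT.isAcyclic.dist_eq_card_filter_not_reachable_deleteEdges (hT.connected u v),
      card_filter]
    exact sum_congr rfl fun e _ => ite_not _ _ _
  have hedge : ∀ e ∈ T.edgeFinset, ∑ u ∈ pendentFinset T, ∑ v ∈ pendentFinset T,
      (if (T.deleteEdges {e}).Reachable u v then 0 else 1) = 2 * edgePendentProd T e := by
    rintro ⟨a, b⟩ he
    exact hT.sum_sum_pendent_ite_reachable_deleteEdges (SimpleGraph.mem_edgeFinset.mp he)
  have hsum : ∑ u ∈ pendentFinset T, ∑ v ∈ pendentFinset T, T.dist u v =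
      ∑ e ∈ T.edgeFinset, ∑ u ∈ pendentFinset T, ∑ v ∈ pendentFinset T,
        (if (T.deleteEdges {e}).Reachable u v then 0 else 1) := by
    simp only [hdist]
    exact (sum_congr rfl fun _ _ => sum_comm).trans sum_comm
  rw [terminalWienerIndex, hsum, sum_congr rfl hedge, ← mul_sum,
    Nat.mul_div_cancel_left _ two_pos]

/-- For a tree `T`, the terminal Wiener index satisfies
`TW(T) = ∑_{e ∈ E(T)} p₁(e) * p₂(e)`. -/
theorem terminal_wiener_index_eq_sum_edge_pendent_prod {V : Type*} [Fintype V] [DecidableEq V]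
    (T : SimpleGraph V) [DecidableRel T.Adj] (hT : T.IsTree) :
    terminalWienerIndex T = ∑ e ∈ T.edgeFinset, edgePendentProd T e :=
  terminal_wiener_index_eq_sum_edge_pendent_prod_general T hT
end

section
/- Let T_1,...,T_m (m ≥ 2) be pairwise vertex-disjoint trees, where T_i has n_i vertices and a distinguished root w_i, and let T be the tree obtained by adding a new vertex w joined by an edge to each of w_1,...,w_m, so T has n = 1 + n_1 + ... + n_m ≥ 3 vertices. Then W(T) = Σ_{i=1}^m [ W(T_i) + (n - n_i)·d_{T_i}(w_i) - n_i² ] + n(n-1), where d_{T_i}(w_i) is the sum of the distances in T_i from w_i to all other vertices of T_i. -/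
/-!
A vertex `a` of the branch `T i` is at distance `d_{T i}(w i, a) + 1` from the new vertex; two
vertices of one branch are at their distance in that branch, and two vertices of different branches
are at the sum of their distances to the new vertex, which is a cut vertex. These formulas are upper
bounds by explicit walks, and lower bounds because they change by at most one along every edge.
Summing them, the branch `T i` contributes `2 W(T i) + 2 (n - n i) (d_{T i}(w i) + n i)` to the
doubled Wiener index.
-/

open Finset

/-- The Wiener index of a graph: the sum of the distances over all unordered pairs of
vertices, i.e. half of the sum over all ordered pairs. -/
noncomputable def wienerIndex {V : Type*} [Fintype V] (G : SimpleGraph V) : ℕ :=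
  (∑ u : V, ∑ v : V, G.dist u v) / 2

/-- The tree obtained from pairwise vertex-disjoint rooted trees `T i` (with root `w i`) by
adding a new vertex `none` joined by an edge to each of the roots `w i`. -/
def joinTrees {ι : Type*} {V : ι → Type*} (T : ∀ i, SimpleGraph (V i)) (w : ∀ i, V i) :
    SimpleGraph (Option (Σ i, V i)) :=
  SimpleGraph.fromRel (fun x y =>
    (∃ i : ι, x = none ∧ y = some ⟨i, w i⟩) ∨
    (∃ (i : ι) (a b : V i), x = some ⟨i, a⟩ ∧ y = some ⟨i, b⟩ ∧ (T i).Adj a b))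

namespace SimpleGraph

variable {V : Type*} {G : SimpleGraph V}

lemma dist_le_dist_add_one_of_adj {u v w : V} (h : G.Adj v w) : G.dist u w ≤ G.dist u v + 1 := by
  simpa [dist_eq_one_iff_adj.mpr h] using h.reachable.dist_triangle_right u

lemma Reachable.le_add_dist_of_adj_le {f : V → ℕ} (hf : ∀ ⦃x y⦄, G.Adj x y → f x ≤ f y + 1)
    {u v : V} (h : G.Reachable u v) : f u ≤ f v + G.dist u v := by
  obtain ⟨p, hp⟩ := h.exists_walk_length_eq_dist
  rw [← hp]
  clear hp h
  induction p with
  | nil => simp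
  | cons hxy _ ih =>
    have := hf hxy
    simp only [Walk.length_cons]
    omega

/-- The paper's `d_G(v)`. -/
noncomputable def transmission [Fintype V] (G : SimpleGraph V) (v : V) : ℕ := ∑ u, G.dist v u

end SimpleGraph

lemma Finset.even_sum_sum_of_symm {α M : Type*} [DecidableEq α] [AddCommMonoid M]
    (f : α → α → M) (hsymm : ∀ x y, f x y = f y x) (hdiag : ∀ x, f x x = 0) (s : Finset α) :
    Even (∑ x ∈ s, ∑ y ∈ s, f x y) := by
  induction s using Finset.induction with
  | empty => simp
  | insert a s ha ih =>
    obtain ⟨k, hk⟩ := ih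
    have hcol : ∑ x ∈ s, f x a = ∑ y ∈ s, f a y := sum_congr rfl fun x _ => hsymm x a
    refine ⟨∑ y ∈ s, f a y + k, ?_⟩
    simp only [sum_insert ha, sum_add_distrib, hdiag, hcol, hk, zero_add]
    abel

lemma two_mul_wienerIndex {V : Type*} [Fintype V] (G : SimpleGraph V) :
    2 * wienerIndex G = ∑ v, G.transmission v := by
  classical
  have := (univ.even_sum_sum_of_symm (fun u v => G.dist u v) (fun _ _ => SimpleGraph.dist_comm)
    fun _ => SimpleGraph.dist_self).two_dvd
  exact Nat.mul_div_cancel' this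

section JoinTrees

open SimpleGraph

variable {ι : Type*} {V : ι → Type*} (T : ∀ i, SimpleGraph (V i)) (w : ∀ i, V i)

lemma joinTrees_adj_some {i : ι} {a b : V i} (h : (T i).Adj a b) :
    (joinTrees T w).Adj (some ⟨i, a⟩) (some ⟨i, b⟩) := by
  rw [joinTrees, fromRel_adj]
  exact ⟨fun hab => h.ne (by simpa using hab), Or.inl (Or.inr ⟨i, a, b, rfl, rfl, h⟩)⟩

lemma joinTrees_adj_none_root (i : ι) : (joinTrees T w).Adj none (some ⟨i, w i⟩) := by
  rw [joinTrees, fromRel_adj]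
  exact ⟨by simp, Or.inl (Or.inl ⟨i, rfl, rfl⟩)⟩

def joinTreesHom (i : ι) : T i →g joinTrees T w :=
  ⟨fun a => some ⟨i, a⟩, joinTrees_adj_some T w⟩

variable {T}

lemma joinTrees_dist_some_le (hc : ∀ i, (T i).Connected) (i : ι) (a b : V i) :
    (joinTrees T w).dist (some ⟨i, a⟩) (some ⟨i, b⟩) ≤ (T i).dist a b := by
  obtain ⟨p, hp⟩ := (hc i).exists_walk_length_eq_dist a b
  exact (dist_le (p.map (joinTreesHom T w i))).trans_eq (by rw [Walk.length_map, hp])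

lemma joinTrees_reachable_none (hc : ∀ i, (T i).Connected) (i : ι) (a : V i) :
    (joinTrees T w).Reachable none (some ⟨i, a⟩) :=
  (joinTrees_adj_none_root T w i).reachable.trans (((hc i) (w i) a).map (joinTreesHom T w i))

lemma joinTrees_connected (hc : ∀ i, (T i).Connected) : (joinTrees T w).Connected := by
  have h : ∀ x, (joinTrees T w).Reachable none x := by
    rintro (_ | ⟨i, a⟩)
    · rfl
    · exact joinTrees_reachable_none w hc i a
  exact (connected_iff _).mpr ⟨fun x y => (h x).symm.trans (h y), ⟨none⟩⟩

variable [DecidableEq ι]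

variable (T) in
noncomputable def joinDist : Option (Σ i, V i) → Option (Σ i, V i) → ℕ
  | none, none => 0
  | none, some ⟨j, b⟩ => (T j).dist (w j) b + 1
  | some ⟨i, a⟩, none => (T i).dist (w i) a + 1
  | some ⟨i, a⟩, some ⟨j, b⟩ =>
    if h : i = j then (T j).dist (h ▸ a) b
    else ((T i).dist (w i) a + 1) + ((T j).dist (w j) b + 1)

@[simp] lemma joinDist_none_none : joinDist T w none none = 0 := rfl

@[simp] lemma joinDist_none_some {j : ι} {b : V j} :
    joinDist T w none (some ⟨j, b⟩) = (T j).dist (w j) b + 1 := rfl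

@[simp] lemma joinDist_some_none {i : ι} {a : V i} :
    joinDist T w (some ⟨i, a⟩) none = (T i).dist (w i) a + 1 := rfl

@[simp] lemma joinDist_some_some_self {i : ι} {a b : V i} :
    joinDist T w (some ⟨i, a⟩) (some ⟨i, b⟩) = (T i).dist a b :=
  dif_pos rfl

lemma joinDist_some_some_of_ne {i j : ι} (hij : i ≠ j) {a : V i} {b : V j} :
    joinDist T w (some ⟨i, a⟩) (some ⟨j, b⟩) =
      ((T i).dist (w i) a + 1) + ((T j).dist (w j) b + 1) :=
  dif_neg hij

@[simp] lemma joinDist_self (x : Option (Σ i, V i)) : joinDist T w x x = 0 := by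
  rcases x with _ | ⟨i, a⟩ <;> simp

lemma joinDist_some_le_of_adj {i : ι} {a b : V i} (h : (T i).Adj a b) (y : Option (Σ i, V i)) :
    joinDist T w (some ⟨i, a⟩) y ≤ joinDist T w (some ⟨i, b⟩) y + 1 := by
  have hroot := dist_le_dist_add_one_of_adj (u := w i) h.symm
  rcases y with _ | ⟨j, c⟩
  · simpa using hroot
  · by_cases hij : i = j
    · subst hij
      simpa [dist_comm (u := c)] using dist_le_dist_add_one_of_adj (u := c) h.symm
    · rw [joinDist_some_some_of_ne w hij, joinDist_some_some_of_ne w hij]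
      omega

lemma joinDist_none_le_root_and_root_le_none (i : ι) (y : Option (Σ i, V i)) :
    joinDist T w none y ≤ joinDist T w (some ⟨i, w i⟩) y + 1 ∧
      joinDist T w (some ⟨i, w i⟩) y ≤ joinDist T w none y + 1 := by
  rcases y with _ | ⟨j, c⟩
  · simp
  · by_cases hij : i = j
    · subst hij
      simp only [joinDist_none_some, joinDist_some_some_self]
      omega
    · simp only [joinDist_none_some, joinDist_some_some_of_ne w hij, SimpleGraph.dist_self]
      omega

lemma joinDist_le_of_adj {x z : Option (Σ i, V i)} (h : (joinTrees T w).Adj x z)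
    (y : Option (Σ i, V i)) : joinDist T w x y ≤ joinDist T w z y + 1 := by
  rw [joinTrees, fromRel_adj] at h
  obtain ⟨-, (⟨i, rfl, rfl⟩ | ⟨i, a, b, rfl, rfl, hab⟩) | (⟨i, rfl, rfl⟩ | ⟨i, a, b, rfl, rfl, hab⟩)⟩ := h
  · exact (joinDist_none_le_root_and_root_le_none w i y).1
  · exact joinDist_some_le_of_adj w hab y
  · exact (joinDist_none_le_root_and_root_le_none w i y).2
  · exact joinDist_some_le_of_adj w hab.symm y

lemma joinDist_le_dist (hc : ∀ i, (T i).Connected) (x y : Option (Σ i, V i)) :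
    joinDist T w x y ≤ (joinTrees T w).dist x y := by
  simpa using ((joinTrees_connected w hc).preconnected x y).le_add_dist_of_adj_le
    (f := fun x => joinDist T w x y) fun _ _ h => joinDist_le_of_adj w h y

lemma dist_le_joinDist (hc : ∀ i, (T i).Connected) (x y : Option (Σ i, V i)) :
    (joinTrees T w).dist x y ≤ joinDist T w x y := by
  have htri := fun {x y z} => (joinTrees_connected w hc).dist_triangle (u := x) (v := y) (w := z)
  have hnone (j : ι) (b : V j) :
      (joinTrees T w).dist none (some ⟨j, b⟩) ≤ (T j).dist (w j) b + 1 := by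
    have hroot : (joinTrees T w).dist none (some ⟨j, w j⟩) = 1 :=
      dist_eq_one_iff_adj.mpr (joinTrees_adj_none_root T w j)
    have := joinTrees_dist_some_le w hc j (w j) b
    have := htri (x := none) (y := some ⟨j, w j⟩) (z := some ⟨j, b⟩)
    omega
  rcases x with _ | ⟨i, a⟩ <;> rcases y with _ | ⟨j, b⟩
  · simp
  · exact hnone j b
  · exact SimpleGraph.dist_comm.trans_le (hnone i a)
  · by_cases hij : i = j
    · subst hij
      simpa using joinTrees_dist_some_le w hc i a b
    · rw [joinDist_some_some_of_ne w hij]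
      exact htri.trans (add_le_add (SimpleGraph.dist_comm.trans_le (hnone i a)) (hnone j b))

theorem dist_joinTrees (hc : ∀ i, (T i).Connected) (x y : Option (Σ i, V i)) :
    (joinTrees T w).dist x y = joinDist T w x y :=
  (dist_le_joinDist w hc x y).antisymm (joinDist_le_dist w hc x y)

variable [Fintype ι] [∀ i, Fintype (V i)]

lemma transmission_joinTrees_none (hc : ∀ i, (T i).Connected) :
    (joinTrees T w).transmission none =
      ∑ j, ((T j).transmission (w j) + Fintype.card (V j)) := by
  simp only [transmission, dist_joinTrees w hc, Fintype.sum_option, Fintype.sum_sigma,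
    joinDist_none_none, joinDist_none_some, sum_add_distrib, sum_const, card_univ, smul_eq_mul,
    mul_one, zero_add]

lemma transmission_joinTrees_some (hc : ∀ i, (T i).Connected) (i : ι) (a : V i) :
    (joinTrees T w).transmission (some ⟨i, a⟩) =
      (T i).transmission a + ((T i).dist (w i) a + 1) * (1 + ∑ j ∈ univ.erase i, Fintype.card (V j))
        + ∑ j ∈ univ.erase i, ((T j).transmission (w j) + Fintype.card (V j)) := by
  have hbranch : ∀ j ∈ univ.erase i, ∑ b : V j, joinDist T w (some ⟨i, a⟩) (some ⟨j, b⟩) =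
      ((T i).dist (w i) a + 1) * Fintype.card (V j)
        + ((T j).transmission (w j) + Fintype.card (V j)) := fun j hj => by
    simp only [joinDist_some_some_of_ne w (ne_of_mem_erase hj).symm, sum_add_distrib, sum_const,
      card_univ, smul_eq_mul, transmission]
    ring
  simp only [transmission, dist_joinTrees w hc, Fintype.sum_option, Fintype.sum_sigma,
    ← add_sum_erase _ _ (mem_univ i), joinDist_some_none, joinDist_some_some_self,
    sum_congr rfl hbranch, sum_add_distrib, ← mul_sum]
  ring

theorem wienerIndex_joinTrees (hc : ∀ i, (T i).Connected) :
    (wienerIndex (joinTrees T w) : ℤ) = ∑ i, ((wienerIndex (T i) : ℤ)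
      + (1 + ∑ j, (Fintype.card (V j) : ℤ) - Fintype.card (V i))
        * ((T i).transmission (w i) + Fintype.card (V i))) := by
  set N : ι → ℤ := fun i => Fintype.card (V i)
  set h : ι → ℤ := fun i => (T i).transmission (w i) + N i
  have hrow (i : ι) : ∑ a : V i, ((joinTrees T w).transmission (some ⟨i, a⟩) : ℤ) =
      2 * wienerIndex (T i) + (1 + ∑ j, N j - N i) * h i + N i * (∑ j, h j - h i) := by
    have hW : (2 * wienerIndex (T i) : ℤ) = ∑ a, ((T i).transmission a : ℤ) := by
      exact_mod_cast two_mul_wienerIndex (T i)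
    simp only [transmission_joinTrees_some w hc, Nat.cast_add, Nat.cast_mul, Nat.cast_sum,
      sum_erase_eq_sub (mem_univ i), sum_add_distrib, ← sum_mul, sum_const, card_univ,
      nsmul_eq_mul, hW]
    simp only [transmission, Nat.cast_sum, Nat.cast_one, h, N, sum_add_distrib]
    ring
  have hW : (2 * wienerIndex (joinTrees T w) : ℤ) = ∑ x, ((joinTrees T w).transmission x : ℤ) := by
    exact_mod_cast two_mul_wienerIndex (joinTrees T w)
  have hroot : (((joinTrees T w).transmission none : ℕ) : ℤ) = ∑ j, h j := by
    simp only [transmission_joinTrees_none w hc, Nat.cast_sum, Nat.cast_add, h, N]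
  have hsum : ∑ j, h j + ∑ i, N i * (∑ j, h j - h i) = ∑ i, (1 + ∑ j, N j - N i) * h i := by
    simp only [mul_sub, sub_mul, add_mul, one_mul, sum_sub_distrib, sum_add_distrib, ← sum_mul,
      ← mul_sum]
    ring
  rw [Fintype.sum_option, Fintype.sum_sigma, hroot] at hW
  simp only [hrow, sum_add_distrib, ← mul_sum] at hW
  have h2 : 2 * (wienerIndex (joinTrees T w) : ℤ) =
      2 * ∑ i, ((wienerIndex (T i) : ℤ) + (1 + ∑ j, N j - N i) * h i) := by
    rw [sum_add_distrib]
    linear_combination hW + hsum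
  exact mul_left_cancel₀ two_ne_zero h2

end JoinTrees

theorem wiener_index_joinTrees_general {ι : Type*} [Fintype ι] {V : ι → Type*} [∀ i, Fintype (V i)]
    (T : ∀ i, SimpleGraph (V i)) (w : ∀ i, V i)
    (hT : ∀ i, (T i).IsTree)
    (n : ℤ) (hn : n = 1 + ∑ j, (Fintype.card (V j) : ℤ)) :
    (wienerIndex (joinTrees T w) : ℤ) =
      (∑ i, ((wienerIndex (T i) : ℤ)
          + (n - (Fintype.card (V i) : ℤ)) * (∑ v : V i, ((T i).dist (w i) v : ℤ))
          - (Fintype.card (V i) : ℤ) ^ 2))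
        + n * (n - 1) := by
  classical
  rw [wienerIndex_joinTrees w fun i => (hT i).connected, ← hn]
  have hsplit : n * (n - 1) = ∑ i, n * Fintype.card (V i) := by
    rw [← mul_sum, hn, add_sub_cancel_left]
  rw [hsplit, ← sum_add_distrib]
  refine sum_congr rfl fun i _ => ?_
  simp only [SimpleGraph.transmission, Nat.cast_sum]
  ring

/-- If `T` is the tree obtained by joining a new vertex `w` to the roots `w i` of `m ≥ 2`
pairwise vertex-disjoint trees `T i` of orders `n i`, and `n = 1 + ∑ i, n i`, then
`W(T) = ∑ i, (W(T i) + (n - n i) · d_{T i}(w i) - (n i)²) + n (n - 1)`, where `d_{T i}(w i)`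
is the sum of the distances in `T i` between `w i` and all other vertices of `T i`. -/
theorem wiener_index_joinTrees {ι : Type*} [Fintype ι] {V : ι → Type*} [∀ i, Fintype (V i)]
    (T : ∀ i, SimpleGraph (V i)) (w : ∀ i, V i)
    (hT : ∀ i, (T i).IsTree) (hm : 2 ≤ Fintype.card ι)
    (n : ℤ) (hn : n = 1 + ∑ j, (Fintype.card (V j) : ℤ)) :
    (wienerIndex (joinTrees T w) : ℤ) =
      (∑ i, ((wienerIndex (T i) : ℤ)
          + (n - (Fintype.card (V i) : ℤ)) * (∑ v : V i, ((T i).dist (w i) v : ℤ))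
          - (Fintype.card (V i) : ℤ) ^ 2))
        + n * (n - 1) :=
  wiener_index_joinTrees_general T w hT n hn
end

section
/- Let B_{k+1} be a generalized Bethe tree of k+1 levels (k ≥ 1) with degree sequence d_1,...,d_k. Set n = 1 + Σ_{i=1}^k ∏_{j=1}^i d_j (the number of vertices of B_{k+1}), n_{i+1} = ∏_{j=1}^i d_j for 1 ≤ i ≤ k, and m_i = 1 + Σ_{j=i+1}^k ∏_{r=i+1}^j d_r for 1 ≤ i ≤ k (so m_k = 1). Then the Wiener index satisfies W(B_{k+1}) = Σ_{i=1}^k n_{i+1} · m_i · (n - m_i). -/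
open Finset

/-- `G` is a generalized Bethe tree of `k+1` levels with root `r` and degree sequence
`d 1, …, d k`: `G` is a tree; for `1 ≤ i ≤ k`, every vertex at distance `i-1` from `r` has
exactly `d i` neighbors at distance `i` from `r`; every vertex is at distance at most `k`
from `r`; and every vertex at distance `k` from `r` is a pendent vertex. -/
def IsGeneralizedBetheTree {V : Type*} [Fintype V] (G : SimpleGraph V) [DecidableRel G.Adj]
    (r : V) (k : ℕ) (d : ℕ → ℕ) : Prop :=
  G.IsTree ∧
  (∀ i ∈ Finset.Icc 1 k, ∀ v : V, G.dist r v = i - 1 →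
      ((G.neighborFinset v).filter (fun u => G.dist r u = i)).card = d i) ∧
  (∀ v : V, G.dist r v ≤ k) ∧
  (∀ v : V, G.dist r v = k → G.degree v = 1)


/-!
Root the tree at `r` and let `T v` be the subtree below `v`. The path between `u` and `w` uses
the edge from `v ≠ r` to its parent exactly when `T v` contains one of `u`, `w` but not the
other, so summing distances over ordered pairs gives `W = ∑_{v ≠ r} |T v| (n - |T v|)`. In a
generalized Bethe tree, counting level by level, level `i` has `n_{i+1}` vertices and the subtree
below each of them has `m_i` vertices.
-/

lemma Finset.card_pairs_separated {α : Type*} [Fintype α] [DecidableEq α] (s : Finset α) :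
    #{x : α × α | ¬(x.1 ∈ s ↔ x.2 ∈ s)} = 2 * (#s * #sᶜ) := by
  have hsplit :
      ({x : α × α | ¬(x.1 ∈ s ↔ x.2 ∈ s)} : Finset (α × α)) = s ×ˢ sᶜ ∪ sᶜ ×ˢ s := by
    ext ⟨a, b⟩
    simp only [mem_filter, mem_univ, true_and, mem_union, mem_product, mem_compl]
    tauto
  have hdisj : Disjoint (s ×ˢ sᶜ) (sᶜ ×ˢ s) :=
    disjoint_left.2 fun x hx hx' => (mem_compl.1 (mem_product.1 hx').1) (mem_product.1 hx).1
  rw [hsplit, card_union_of_disjoint hdisj, card_product, card_product]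
  ring

namespace SimpleGraph

variable {V : Type*} {G : SimpleGraph V}

lemma exists_adj_dist_add_one_eq {u w : V} (h : G.dist u w ≠ 0) :
    ∃ x, G.Adj x w ∧ G.dist u x + 1 = G.dist u w := by
  obtain ⟨p, hp⟩ := exists_walk_of_dist_ne_zero h
  have hnil : ¬ p.Nil := by rw [← Walk.length_eq_zero_iff]; omega
  have hx := p.adj_penultimate hnil
  have hle : G.dist u p.penultimate ≤ p.length - 1 :=
    (G.dist_le p.dropLast).trans_eq (Walk.length_dropLast p)
  refine ⟨p.penultimate, hx, ?_⟩
  rcases hx.diff_dist_adj (u := u) with h' | h' | h' <;> omega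

namespace IsTree

lemma eq_of_adj_of_dist_add_one_eq (hT : G.IsTree) (r : V) {u x y : V} (hx : G.Adj x u)
    (hy : G.Adj y u) (hxu : G.dist r x + 1 = G.dist r u) (hyu : G.dist r y + 1 = G.dist r u) :
    x = y := by
  obtain ⟨p, -, hp⟩ := hT.connected.exists_path_of_dist r x
  obtain ⟨q, -, hq⟩ := hT.connected.exists_path_of_dist r y
  have hpx : (p.concat hx).IsPath := (p.concat hx).isPath_of_length_eq_dist (by simp [hp, hxu])
  have hqy : (q.concat hy).IsPath := (q.concat hy).isPath_of_length_eq_dist (by simp [hq, hyu])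
  exact (Walk.concat_inj (congrArg Subtype.val
    ((hT.isAcyclic.subsingleton_path r u).elim ⟨_, hpx⟩ ⟨_, hqy⟩))).1

lemma dist_parent_add_one (hT : G.IsTree) (r : V) {u w p : V} (hne : u ≠ w)
    (hle : G.dist r u ≤ G.dist r w) (hpw : G.Adj p w) (hp : G.dist r p + 1 = G.dist r w) :
    G.dist u p + 1 = G.dist u w := by
  induction hn : G.dist u w using Nat.strong_induction_on generalizing w p with
  | _ n ih =>
    obtain ⟨x, hxw, hx⟩ :=
      exists_adj_dist_add_one_eq (hT.connected.pos_dist_of_ne hne).ne'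
    -- The last step of a geodesic from `u` to `w` cannot come from a child `x` of `w`:
    -- by induction, the geodesic from `u` to `x` would pass through `w`.
    rcases hT.dist_eq_dist_add_one_of_adj r hxw with hchild | hparent
    · have hux : u ≠ x := by rintro rfl; omega
      have := ih _ (by omega) hux (by omega) hxw.symm hchild.symm rfl
      omega
    · rw [hT.eq_of_adj_of_dist_add_one_eq r hpw hxw hp hparent.symm, ← hn, hx]

end IsTree

variable [Fintype V]

/-- The vertices `x` such that `v` lies on a geodesic from `r` to `x`: in a tree rooted at `r`,
the subtree hanging from `v`. -/
noncomputable def subtree (G : SimpleGraph V) (r v : V) : Finset V :=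
  {x | G.dist r x = G.dist r v + G.dist v x}

lemma mem_subtree {r v x : V} : x ∈ G.subtree r v ↔ G.dist r x = G.dist r v + G.dist v x := by
  simp [subtree]

lemma subtree_root (r : V) : G.subtree r r = Finset.univ := by
  ext x
  simp [mem_subtree]

lemma mem_subtree_self (r v : V) : v ∈ G.subtree r v := by
  simp [mem_subtree]

namespace IsTree

lemma mem_subtree_iff_of_adj (hT : G.IsTree) (r : V) {v w p : V} (hvw : v ≠ w) (hpw : G.Adj p w)
    (hp : G.dist r p + 1 = G.dist r w) : p ∈ G.subtree r v ↔ w ∈ G.subtree r v := by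
  simp only [mem_subtree]
  constructor
  · intro hpv
    have h₁ : G.dist v w ≤ G.dist v p + G.dist p w := hT.connected.dist_triangle
    have h₂ : G.dist r w ≤ G.dist r v + G.dist v w := hT.connected.dist_triangle
    rw [dist_eq_one_iff_adj.2 hpw] at h₁
    omega
  · intro hwv
    have := hT.dist_parent_add_one r hvw (by omega) hpw hp
    omega

lemma notMem_subtree (hT : G.IsTree) (r : V) {u w : V} (hne : u ≠ w)
    (hle : G.dist r u ≤ G.dist r w) : u ∉ G.subtree r w := by
  have := hT.connected.pos_dist_of_ne hne.symm
  rw [mem_subtree]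
  omega

lemma dist_eq_card_separating [DecidableEq V] (hT : G.IsTree) (r u w : V) :
    G.dist u w = #{v | ¬(u ∈ G.subtree r v ↔ w ∈ G.subtree r v)} := by
  induction hn : G.dist u w using Nat.strong_induction_on generalizing u w with
  | _ n ih =>
    wlog hle : G.dist r u ≤ G.dist r w generalizing u w
    · rw [dist_comm] at hn
      simpa only [Iff.comm] using this w u hn (by omega)
    obtain rfl | hne := eq_or_ne u w
    · simp [← hn]
    have hw : G.dist r w ≠ 0 := fun hw => hne <|
      (hT.connected.dist_eq_zero_iff.1 (by omega)).symm.trans (hT.connected.dist_eq_zero_iff.1 hw)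
    -- Replacing `w` by its parent `p` shortens the distance by one and removes exactly `w` from
    -- the separating vertices.
    obtain ⟨p, hpw, hp⟩ := exists_adj_dist_add_one_eq hw
    have hup := hT.dist_parent_add_one r hne hle hpw hp
    have hpT : p ∉ G.subtree r w := by rw [mem_subtree]; omega
    have hsep : ({v | ¬(u ∈ G.subtree r v ↔ w ∈ G.subtree r v)} : Finset V) =
        insert w ({v | ¬(u ∈ G.subtree r v ↔ p ∈ G.subtree r v)} : Finset V) := by
      ext v
      obtain rfl | hvw := eq_or_ne v w
      · simp [hT.notMem_subtree r hne hle, mem_subtree_self]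
      · simp [hvw, hT.mem_subtree_iff_of_adj r hvw hpw hp]
    have hwp : w ∉ ({v | ¬(u ∈ G.subtree r v ↔ p ∈ G.subtree r v)} : Finset V) := by
      simp [hT.notMem_subtree r hne hle, hpT]
    rw [← hn, ← hup, ih _ (by omega) u p rfl, hsep, card_insert_of_notMem hwp]

lemma sum_sum_dist [DecidableEq V] (hT : G.IsTree) (r : V) :
    ∑ u, ∑ w, G.dist u w = 2 * ∑ v, #(G.subtree r v) * #(G.subtree r v)ᶜ := by
  calc ∑ u, ∑ w, G.dist u w
      = ∑ v, ∑ x : V × V, if ¬(x.1 ∈ G.subtree r v ↔ x.2 ∈ G.subtree r v) then 1 else 0 := by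
        simp_rw [hT.dist_eq_card_separating r, card_filter, Fintype.sum_prod_type]
        exact (sum_congr rfl fun u _ => sum_comm).trans sum_comm
    _ = 2 * ∑ v, #(G.subtree r v) * #(G.subtree r v)ᶜ := by
        simp_rw [← card_filter, card_pairs_separated, mul_sum]

lemma wienerIndex_eq [DecidableEq V] (hT : G.IsTree) (r : V) :
    wienerIndex G = ∑ v, #(G.subtree r v) * #(G.subtree r v)ᶜ := by
  rw [wienerIndex, hT.sum_sum_dist r, Nat.mul_div_cancel_left _ two_pos]

lemma wienerIndex_eq_sum_levels [DecidableEq V] (hT : G.IsTree) (r : V) {k : ℕ}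
    (hk : ∀ v, G.dist r v ≤ k) :
    wienerIndex G =
      ∑ i ∈ Icc 1 k, ∑ v with G.dist r v = i, #(G.subtree r v) * #(G.subtree r v)ᶜ := by
  rw [hT.wienerIndex_eq r,
    ← sum_fiberwise_of_maps_to fun v _ => mem_Icc.2 ⟨Nat.zero_le _, hk v⟩,
    ← insert_Icc_add_one_left_eq_Icc (Nat.zero_le k), sum_insert (by simp), zero_add,
    add_eq_right]
  refine sum_eq_zero fun v hv => ?_
  rw [← hT.connected.dist_eq_zero_iff.1 (mem_filter.1 hv).2, subtree_root, compl_univ,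
    card_empty, mul_zero]

end IsTree

end SimpleGraph

namespace IsGeneralizedBetheTree

open SimpleGraph

variable {V : Type*} [Fintype V] {G : SimpleGraph V} [DecidableRel G.Adj] {r : V} {k : ℕ}
  {d : ℕ → ℕ}

lemma card_subtree_filter_dist_eq [DecidableEq V] (hG : IsGeneralizedBetheTree G r k d) (v : V)
    {j : ℕ} (hvj : G.dist r v ≤ j) (hjk : j ≤ k) :
    #{x ∈ G.subtree r v | G.dist r x = j} = ∏ s ∈ Icc (G.dist r v + 1) j, d s := by
  obtain ⟨hT, hdeg, -, -⟩ := hG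
  induction j, hvj using Nat.le_induction with
  | base =>
    rw [Icc_eq_empty (by omega), prod_empty, card_eq_one]
    refine ⟨v, ext fun x => ?_⟩
    simp only [mem_filter, mem_subtree, mem_singleton]
    constructor
    · rintro ⟨hx, hxv⟩
      exact (hT.connected.dist_eq_zero_iff.1 (by omega)).symm
    · rintro rfl
      simp
  | succ j hvj ih =>
    have hchildren : {x ∈ G.subtree r v | G.dist r x = j + 1} =
        {x ∈ G.subtree r v | G.dist r x = j}.biUnion
          fun p => {y ∈ G.neighborFinset p | G.dist r y = j + 1} := by
      ext y
      simp only [mem_biUnion, mem_filter, mem_neighborFinset]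
      constructor
      · rintro ⟨hy, hyj⟩
        obtain ⟨p, hpy, hp⟩ := exists_adj_dist_add_one_eq (show G.dist r y ≠ 0 by omega)
        have hvy : v ≠ y := by rintro rfl; omega
        exact ⟨p, ⟨(hT.mem_subtree_iff_of_adj r hvy hpy hp).2 hy, by omega⟩, hpy, hyj⟩
      · rintro ⟨p, ⟨hp, hpj⟩, hpy, hyj⟩
        have hvy : v ≠ y := by rintro rfl; omega
        exact ⟨(hT.mem_subtree_iff_of_adj r hvy hpy (by omega)).1 hp, hyj⟩
    rw [hchildren, card_biUnion, sum_const_nat (m := d (j + 1)), ih (by omega),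
      prod_Icc_succ_top (by omega)]
    · intro p hp
      exact hdeg (j + 1) (mem_Icc.2 ⟨by omega, hjk⟩) p (by simpa using (mem_filter.1 hp).2)
    · intro p hp q hq hpq
      refine disjoint_left.2 fun y hyp hyq => hpq ?_
      simp only [mem_coe, mem_filter, mem_neighborFinset] at hp hq hyp hyq
      exact hT.eq_of_adj_of_dist_add_one_eq r hyp.1 hyq.1 (by omega) (by omega)

lemma card_subtree [DecidableEq V] (hG : IsGeneralizedBetheTree G r k d) (v : V) :
    #(G.subtree r v) = 1 + ∑ j ∈ Icc (G.dist r v + 1) k, ∏ s ∈ Icc (G.dist r v + 1) j, d s := by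
  have hdepth : ∀ x, G.dist r x ≤ k := hG.2.2.1
  have hvk := hdepth v
  have hmaps : (G.subtree r v : Set V).MapsTo (G.dist r) (Icc (G.dist r v) k) := fun x hx =>
    mem_Icc.2 ⟨by rw [mem_coe, mem_subtree] at hx; omega, hdepth x⟩
  rw [card_eq_sum_card_fiberwise hmaps, ← insert_Icc_add_one_left_eq_Icc hvk,
    sum_insert (by simp), hG.card_subtree_filter_dist_eq v le_rfl hvk, Icc_eq_empty (by omega),
    prod_empty]
  refine congrArg (1 + ·) (sum_congr rfl fun j hj => ?_)
  have hj' := mem_Icc.1 hj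
  exact hG.card_subtree_filter_dist_eq v (by omega) hj'.2

lemma card_eq (hG : IsGeneralizedBetheTree G r k d) :
    Fintype.card V = 1 + ∑ j ∈ Icc 1 k, ∏ s ∈ Icc 1 j, d s := by
  classical
  simpa [subtree_root] using hG.card_subtree r

lemma card_filter_dist_eq [DecidableEq V] (hG : IsGeneralizedBetheTree G r k d) {j : ℕ}
    (hjk : j ≤ k) : #{x | G.dist r x = j} = ∏ s ∈ Icc 1 j, d s := by
  simpa [subtree_root] using hG.card_subtree_filter_dist_eq r (by simp) hjk

end IsGeneralizedBetheTree

theorem wiener_index_generalizedBetheTree_general {V : Type*} [Fintype V] (G : SimpleGraph V)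
    [DecidableRel G.Adj] (r : V) (k : ℕ) (d : ℕ → ℕ)
    (hG : IsGeneralizedBetheTree G r k d)
    (n : ℤ) (hn : n = 1 + ∑ i ∈ Finset.Icc 1 k, ∏ j ∈ Finset.Icc 1 i, (d j : ℤ))
    (m : ℕ → ℤ)
    (hm : ∀ i ∈ Finset.Icc 1 k,
      m i = 1 + ∑ j ∈ Finset.Icc (i + 1) k, ∏ s ∈ Finset.Icc (i + 1) j, (d s : ℤ)) :
    (wienerIndex G : ℤ) =
      ∑ i ∈ Finset.Icc 1 k, (∏ j ∈ Finset.Icc 1 i, (d j : ℤ)) * m i * (n - m i) := by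
  classical
  have hcard : (Fintype.card V : ℤ) = n := by
    rw [hn, hG.card_eq]
    push_cast
    rfl
  have hterm : ∀ i ∈ Icc 1 k, ∀ v ∈ ({v | G.dist r v = i} : Finset V),
      ((#(G.subtree r v) * #(G.subtree r v)ᶜ : ℕ) : ℤ) = m i * (n - m i) := by
    intro i hi v hv
    rw [card_compl, Nat.cast_mul, Nat.cast_sub (card_le_univ _), hcard, hG.card_subtree v,
      (mem_filter.1 hv).2, hm i hi]
    push_cast
    rfl
  rw [hG.1.wienerIndex_eq_sum_levels r hG.2.2.1, Nat.cast_sum]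
  refine sum_congr rfl fun i hi => ?_
  rw [Nat.cast_sum, sum_congr rfl (hterm i hi), sum_const,
    hG.card_filter_dist_eq (mem_Icc.1 hi).2, nsmul_eq_mul, Nat.cast_prod, mul_assoc]

/-- Wiener index of a generalized Bethe tree `B_{k+1}` of `k+1` levels:
`W(B_{k+1}) = ∑_{i=1}^k n_{i+1} · m_i · (n - m_i)` where `n_{i+1} = ∏_{j=1}^i d j`,
`m_i = 1 + ∑_{j=i+1}^k ∏_{r=i+1}^j d r` and `n = 1 + ∑_{i=1}^k ∏_{j=1}^i d j`. -/
theorem wiener_index_generalizedBetheTree {V : Type*} [Fintype V] (G : SimpleGraph V)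
    [DecidableRel G.Adj] (r : V) (k : ℕ) (d : ℕ → ℕ)
    (hk : 1 ≤ k) (hd : ∀ i ∈ Finset.Icc 1 k, 1 ≤ d i)
    (hG : IsGeneralizedBetheTree G r k d)
    (n : ℤ) (hn : n = 1 + ∑ i ∈ Finset.Icc 1 k, ∏ j ∈ Finset.Icc 1 i, (d j : ℤ))
    (m : ℕ → ℤ)
    (hm : ∀ i ∈ Finset.Icc 1 k,
      m i = 1 + ∑ j ∈ Finset.Icc (i + 1) k, ∏ s ∈ Finset.Icc (i + 1) j, (d s : ℤ)) :
    (wienerIndex G : ℤ) =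
      ∑ i ∈ Finset.Icc 1 k, (∏ j ∈ Finset.Icc 1 i, (d j : ℤ)) * m i * (n - m i) :=
  wiener_index_generalizedBetheTree_general G r k d hG n hn m hm
end

section
/- Let k ≥ 1 and d ≥ 3, and let T_{k,d} be the regular dendrimer tree of k+1 levels. Then its Wiener index satisfies W(T_{k,d}) = (d/(d-2)³)·[ (d-1)^{2k}·(k·d² - 2(k+1)·d + 1) + 2d·(d-1)^k - 1 ]. -/
/-!
Root the tree at `r` and let `A u` be the set of ancestors of `u` (`u` included). In a tree
`d(u, v) = #(A u ∆ A v)`: an edge step changes the ancestor set by one vertex, and conversely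
one can walk from `u` to `v` by repeatedly moving a vertex that is not an ancestor of the
other one to its parent. Counting, for each `w`, the ordered pairs `(u, v)` that `w` separates
gives `W(G) = ∑_w s_w (n - s_w)`, where `s_w` is the number of descendants of `w`. In a
generalized Bethe tree `s_w` depends only on the level of `w`, and for the dendrimer every
level contributes a product of geometric sums, which add up to the closed form.
-/

open Finset

open SimpleGraph
open scoped symmDiff

namespace Finset

theorem insert_symmDiff_of_notMem {α : Type*} [DecidableEq α] {a : α} {s t : Finset α}
    (hs : a ∉ s) (ht : a ∉ t) : insert a s ∆ t = insert a (s ∆ t) := by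
  ext x
  by_cases hx : x = a
  · subst hx; simp [mem_symmDiff, hs, ht]
  · simp [mem_symmDiff, hx]

theorem sum_sum_card_symmDiff {α β : Type*} [Fintype α] [Fintype β] [DecidableEq β]
    (S : α → Finset β) :
    ∑ a, ∑ b, #(S a ∆ S b) = 2 * ∑ x, #{a | x ∈ S a} * #{a | x ∉ S a} := by
  let f (x : β) (a : α) : ℕ := if x ∈ S a then 1 else 0
  let g (x : β) (a : α) : ℕ := if x ∉ S a then 1 else 0
  have hcount (a b : α) : #(S a ∆ S b) = ∑ x, (f x a * g x b + g x a * f x b) := by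
    rw [← filter_univ_mem (S a ∆ S b), card_filter]
    refine sum_congr rfl fun x _ => ?_
    by_cases h1 : x ∈ S a <;> by_cases h2 : x ∈ S b <;> simp [f, g, h1, h2, mem_symmDiff]
  have hpairs (x : β) : ∑ a, ∑ b, (f x a * g x b + g x a * f x b) =
      2 * (#{a | x ∈ S a} * #{a | x ∉ S a}) := by
    simp only [sum_add_distrib, ← sum_mul_sum, f, g, ← card_filter]
    ring
  simp_rw [hcount, mul_sum, ← hpairs]
  exact (sum_congr rfl fun a _ => sum_comm).trans sum_comm

end Finset

namespace SimpleGraph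

variable {V : Type*} {G : SimpleGraph V}

theorem Connected.exists_adj_dist_add_one (hG : G.Connected) {x u : V} (hne : x ≠ u) :
    ∃ p, G.Adj p u ∧ G.dist x p + 1 = G.dist x u := by
  obtain ⟨W, hW⟩ := hG.exists_walk_length_eq_dist u x
  cases W with
  | nil => exact absurd rfl hne
  | @cons _ p _ hup W =>
    refine ⟨p, hup.symm, ?_⟩
    have hle := dist_le W
    have htri : G.dist u x ≤ G.dist u p + G.dist p x := hG.dist_triangle
    rw [Walk.length_cons] at hW
    rw [dist_eq_one_iff_adj.mpr hup] at htri
    rw [dist_comm (u := x), dist_comm (u := x)]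
    omega

theorem IsTree.eq_of_adj_of_dist_add_one (hT : G.IsTree) {r p q u : V} (hp : G.Adj p u)
    (hq : G.Adj q u) (hpu : G.dist r p + 1 = G.dist r u) (hqu : G.dist r q + 1 = G.dist r u) :
    p = q := by
  classical
  obtain ⟨P, hP, -⟩ := hT.connected.exists_path_of_dist r u
  -- Every vertex of a geodesic from `r` to `x` is closer to `r` than `u`, so `x` lies on `P`.
  have key : ∀ x, G.Adj x u → G.dist r x + 1 = G.dist r u → x = P.penultimate := by
    intro x hx hxu
    obtain ⟨Q, hQ, hQl⟩ := hT.connected.exists_path_of_dist r x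
    have hu : u ∉ Q.support := fun hu => by
      have := dist_le (Q.takeUntil u hu)
      have := Q.length_takeUntil_le_length hu
      omega
    exact hT.isAcyclic.eq_penultimate_of_adj_end hP hx.symm
      (hT.isAcyclic.mem_support_of_ne_mem_support_of_adj_of_isPath hP hQ hx.symm hu)
  rw [key p hp hpu, key q hq hqu]

variable [Fintype V]

/-- The vertices on a geodesic from `r` to `u`: in a tree rooted at `r`, the ancestors of `u`
(`u` included). -/
noncomputable def ancestors (G : SimpleGraph V) (r u : V) : Finset V :=
  {w | G.dist r w + G.dist w u = G.dist r u}

variable {r u v w : V}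

theorem mem_ancestors : w ∈ G.ancestors r u ↔ G.dist r w + G.dist w u = G.dist r u := by
  simp [ancestors]

theorem root_mem_ancestors : r ∈ G.ancestors r u := by
  simp [mem_ancestors]

theorem dist_le_of_mem_ancestors (h : w ∈ G.ancestors r u) : G.dist r w ≤ G.dist r u := by
  rw [mem_ancestors] at h
  omega

theorem Connected.eq_of_mem_ancestors (hG : G.Connected) (huv : u ∈ G.ancestors r v)
    (hvu : v ∈ G.ancestors r u) : u = v := by
  rw [mem_ancestors] at huv hvu
  rw [← hG.dist_eq_zero_iff, dist_comm]
  omega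

theorem IsTree.ancestors_eq_insert [DecidableEq V] (hT : G.IsTree) {p : V} (hp : G.Adj p u)
    (hpu : G.dist r p + 1 = G.dist r u) : G.ancestors r u = insert u (G.ancestors r p) := by
  ext w
  rw [Finset.mem_insert, mem_ancestors, mem_ancestors]
  have hpu' : G.dist p u = 1 := dist_eq_one_iff_adj.mpr hp
  constructor
  · intro hw
    refine or_iff_not_imp_left.mpr fun hwu => ?_
    obtain ⟨q, hq, hwq⟩ := hT.connected.exists_adj_dist_add_one hwu
    have h₁ : G.dist r q ≤ G.dist r w + G.dist w q := hT.connected.dist_triangle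
    have h₂ : G.dist r u ≤ G.dist r q + G.dist q u := hT.connected.dist_triangle
    rw [dist_eq_one_iff_adj.mpr hq] at h₂
    obtain rfl : q = p := hT.eq_of_adj_of_dist_add_one hq hp (by omega) hpu
    omega
  · rintro (rfl | hw)
    · simp
    · have : G.dist r u ≤ G.dist r w + G.dist w u := hT.connected.dist_triangle
      have : G.dist w u ≤ G.dist w p + G.dist p u := hT.connected.dist_triangle
      omega

variable [DecidableEq V]

theorem IsTree.exists_card_symmDiff_ancestors_eq_add_one (hT : G.IsTree)
    (hu : u ∉ G.ancestors r v) : ∃ p, G.Adj p u ∧ G.dist r p < G.dist r u ∧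
      #(G.ancestors r u ∆ G.ancestors r v) = #(G.ancestors r p ∆ G.ancestors r v) + 1 := by
  have hru : r ≠ u := by rintro rfl; exact hu root_mem_ancestors
  obtain ⟨p, hp, hpu⟩ := hT.connected.exists_adj_dist_add_one hru
  have hup : u ∉ G.ancestors r p := fun h => by have := dist_le_of_mem_ancestors h; omega
  refine ⟨p, hp, by omega, ?_⟩
  rw [hT.ancestors_eq_insert hp hpu, Finset.insert_symmDiff_of_notMem hup hu,
    Finset.card_insert_of_notMem (by simp [Finset.mem_symmDiff, hup, hu])]

theorem IsTree.card_symmDiff_ancestors_of_adj (hT : G.IsTree) (huv : G.Adj u v) :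
    #(G.ancestors r u ∆ G.ancestors r v) = 1 := by
  wlog h : G.dist r u + 1 = G.dist r v generalizing u v
  · rw [symmDiff_comm]
    refine this huv.symm ?_
    have := hT.dist_eq_dist_add_one_of_adj r huv
    omega
  have hvu : v ∉ G.ancestors r u := fun h' => by have := dist_le_of_mem_ancestors h'; omega
  rw [hT.ancestors_eq_insert huv h, symmDiff_comm,
    Finset.insert_symmDiff_of_notMem hvu hvu, symmDiff_self]
  rfl

theorem IsTree.card_symmDiff_ancestors_le_length (hT : G.IsTree) (p : G.Walk u v) :
    #(G.ancestors r u ∆ G.ancestors r v) ≤ p.length := by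
  induction p with
  | nil => simp
  | @cons u x v hux p ih =>
    calc #(G.ancestors r u ∆ G.ancestors r v)
        ≤ #(G.ancestors r u ∆ G.ancestors r x ∪ G.ancestors r x ∆ G.ancestors r v) :=
          Finset.card_le_card (symmDiff_triangle _ _ _)
      _ ≤ #(G.ancestors r u ∆ G.ancestors r x) + #(G.ancestors r x ∆ G.ancestors r v) :=
          Finset.card_union_le _ _
      _ ≤ (p.cons hux).length := by
          rw [hT.card_symmDiff_ancestors_of_adj hux, Walk.length_cons]; omega

theorem IsTree.dist_le_card_symmDiff_ancestors (hT : G.IsTree) (u v : V) :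
    G.dist u v ≤ #(G.ancestors r u ∆ G.ancestors r v) := by
  induction hn : G.dist r u + G.dist r v using Nat.strong_induction_on generalizing u v with
  | _ n ih =>
  by_cases hu : u ∈ G.ancestors r v
  · by_cases hv : v ∈ G.ancestors r u
    · simp [hT.connected.eq_of_mem_ancestors hu hv]
    · obtain ⟨p, hp, hpv, hcard⟩ := hT.exists_card_symmDiff_ancestors_eq_add_one hv
      have := ih _ (by omega) u p rfl
      have : G.dist u v ≤ G.dist u p + G.dist p v := hT.connected.dist_triangle
      rw [dist_eq_one_iff_adj.mpr hp] at this
      rw [symmDiff_comm, hcard, symmDiff_comm]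
      omega
  · obtain ⟨p, hp, hpu, hcard⟩ := hT.exists_card_symmDiff_ancestors_eq_add_one hu
    have := ih _ (by omega) p v rfl
    have : G.dist u v ≤ G.dist u p + G.dist p v := hT.connected.dist_triangle
    rw [dist_eq_one_iff_adj.mpr hp.symm] at this
    omega

theorem IsTree.dist_eq_card_symmDiff_ancestors (hT : G.IsTree) (r u v : V) :
    G.dist u v = #(G.ancestors r u ∆ G.ancestors r v) := by
  obtain ⟨p, hp⟩ := hT.connected.exists_walk_length_eq_dist u v
  exact (hT.dist_le_card_symmDiff_ancestors u v).antisymm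
    (hp ▸ hT.card_symmDiff_ancestors_le_length p)

theorem IsTree.wienerIndex_eq_sum_mul (hT : G.IsTree) (r : V) :
    wienerIndex G = ∑ w, #{u | w ∈ G.ancestors r u} * #{u | w ∉ G.ancestors r u} := by
  simp_rw [wienerIndex, hT.dist_eq_card_symmDiff_ancestors r, Finset.sum_sum_card_symmDiff]
  omega

end SimpleGraph

/-- The number of descendants `t` levels below a vertex at level `i` of a generalized Bethe tree
with degree sequence `ds`. -/
def betheDescendantCount (ds : ℕ → ℕ) (i t : ℕ) : ℕ :=
  ∏ s ∈ range t, ds (i + s + 1)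

/-- The number of vertices of the branch hanging from a vertex at level `i` of a generalized
Bethe tree of `k + 1` levels with degree sequence `ds`. -/
def betheBranchSize (k : ℕ) (ds : ℕ → ℕ) (i : ℕ) : ℕ :=
  ∑ t ∈ range (k + 1 - i), betheDescendantCount ds i t

namespace IsGeneralizedBetheTree

variable {V : Type*} [Fintype V] [DecidableEq V] {G : SimpleGraph V} [DecidableRel G.Adj]
  {r : V} {k : ℕ} {ds : ℕ → ℕ}

theorem card_descendants_at_depth_succ (hG : IsGeneralizedBetheTree G r k ds) {w : V} {t : ℕ}
    (ht : G.dist r w + t + 1 ≤ k) :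
    #{u | w ∈ G.ancestors r u ∧ G.dist r u = G.dist r w + (t + 1)} =
      #{v | w ∈ G.ancestors r v ∧ G.dist r v = G.dist r w + t} * ds (G.dist r w + t + 1) := by
  obtain ⟨hT, hchildren, -, -⟩ := hG
  -- Every vertex of the upper level has exactly one neighbour (its parent) in the lower one,
  -- and every vertex of the lower level has `ds (dist r w + t + 1)` neighbours (its children)
  -- in the upper one.
  rw [← Finset.card_mul_eq_card_mul G.Adj (m := 1) ?_ ?_, mul_one]
  · intro u hu
    simp only [Finset.mem_filter, Finset.mem_univ, true_and] at hu
    obtain ⟨p, hp, hpu⟩ := hT.connected.exists_adj_dist_add_one (x := r) (u := u)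
      (by rintro rfl; simp at hu)
    rw [Finset.card_eq_one]
    refine ⟨p, Finset.ext fun v => ?_⟩
    simp only [Finset.mem_bipartiteAbove, Finset.mem_filter, Finset.mem_univ, true_and,
      Finset.mem_singleton]
    constructor
    · rintro ⟨⟨-, hv⟩, huv⟩
      exact hT.eq_of_adj_of_dist_add_one huv.symm hp (by omega) hpu
    · rintro rfl
      have hwp := hu.1
      rw [hT.ancestors_eq_insert hp hpu, Finset.mem_insert] at hwp
      refine ⟨⟨hwp.resolve_left fun h => ?_, by omega⟩, hp.symm⟩
      subst h
      omega
  · intro v hv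
    simp only [Finset.mem_filter, Finset.mem_univ, true_and] at hv
    rw [← hchildren (G.dist r w + t + 1) (Finset.mem_Icc.mpr ⟨by omega, ht⟩) v (by omega)]
    congr 1
    ext u
    simp only [Finset.mem_bipartiteBelow, Finset.mem_filter, Finset.mem_univ, true_and,
      SimpleGraph.mem_neighborFinset]
    constructor
    · rintro ⟨⟨-, hu⟩, huv⟩
      exact ⟨huv.symm, by omega⟩
    · rintro ⟨hvu, hu⟩
      rw [hT.ancestors_eq_insert hvu (by omega)]
      exact ⟨⟨Finset.mem_insert_of_mem hv.1, by omega⟩, hvu.symm⟩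

theorem card_descendants_at_depth (hG : IsGeneralizedBetheTree G r k ds) {w : V} {t : ℕ}
    (ht : G.dist r w + t ≤ k) :
    #{u | w ∈ G.ancestors r u ∧ G.dist r u = G.dist r w + t} =
      betheDescendantCount ds (G.dist r w) t := by
  induction t with
  | zero =>
    rw [betheDescendantCount, Finset.prod_range_zero, Finset.card_eq_one]
    refine ⟨w, Finset.ext fun u => ?_⟩
    simp only [Finset.mem_filter, Finset.mem_univ, true_and, Finset.mem_singleton,
      mem_ancestors, add_zero]
    constructor
    · rintro ⟨hwu, hu⟩
      exact ((hG.1.connected.dist_eq_zero_iff).mp (by omega)).symm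
    · rintro rfl
      simp
  | succ t ih =>
    rw [hG.card_descendants_at_depth_succ (by omega), ih (by omega), betheDescendantCount,
      betheDescendantCount, Finset.prod_range_succ]

theorem card_descendants (hG : IsGeneralizedBetheTree G r k ds) (w : V) :
    #{u | w ∈ G.ancestors r u} = betheBranchSize k ds (G.dist r w) := by
  have hwk := hG.2.2.1 w
  rw [Finset.card_eq_sum_card_fiberwise (f := fun u => G.dist r u - G.dist r w)
    (t := range (k + 1 - G.dist r w)) fun u _ => by have := hG.2.2.1 u; simp; omega]
  refine Finset.sum_congr rfl fun t ht => ?_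
  rw [Finset.mem_range] at ht
  rw [← hG.card_descendants_at_depth (by omega), Finset.filter_filter]
  congr 1
  ext u
  simp only [Finset.mem_filter, Finset.mem_univ, true_and]
  constructor
  · rintro ⟨hwu, hu⟩
    exact ⟨hwu, by have := dist_le_of_mem_ancestors hwu; omega⟩
  · rintro ⟨hwu, hu⟩
    exact ⟨hwu, by omega⟩

theorem card_level (hG : IsGeneralizedBetheTree G r k ds) {i : ℕ} (hi : i ≤ k) :
    #{u | G.dist r u = i} = betheDescendantCount ds 0 i := by
  simpa [root_mem_ancestors] using hG.card_descendants_at_depth (w := r) (t := i) (by simpa)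

theorem card_eq_betheBranchSize (hG : IsGeneralizedBetheTree G r k ds) :
    Fintype.card V = betheBranchSize k ds 0 := by
  simpa [root_mem_ancestors] using hG.card_descendants r

theorem sum_comp_dist {M : Type*} [AddCommMonoid M] (hG : IsGeneralizedBetheTree G r k ds)
    (F : ℕ → M) :
    ∑ w, F (G.dist r w) = ∑ i ∈ range (k + 1), betheDescendantCount ds 0 i • F i := by
  rw [← Finset.sum_fiberwise_of_maps_to (g := fun w => G.dist r w) (t := range (k + 1))
    fun w _ => Finset.mem_range.mpr (Nat.lt_succ_of_le (hG.2.2.1 w))]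
  refine Finset.sum_congr rfl fun i hi => ?_
  rw [Finset.sum_congr rfl fun w hw => by rw [(Finset.mem_filter.mp hw).2], Finset.sum_const,
    hG.card_level (Nat.lt_succ_iff.mp (Finset.mem_range.mp hi))]

theorem wienerIndex_eq (hG : IsGeneralizedBetheTree G r k ds) :
    (wienerIndex G : ℚ) = ∑ i ∈ range k, (betheDescendantCount ds 0 (i + 1) : ℚ) *
      betheBranchSize k ds (i + 1) * (betheBranchSize k ds 0 - betheBranchSize k ds (i + 1)) := by
  have hcompl (w : V) : (#{u | w ∉ G.ancestors r u} : ℚ) =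
      betheBranchSize k ds 0 - #{u | w ∈ G.ancestors r u} := by
    have h := Finset.card_filter_add_card_filter_not (s := univ) (fun u => w ∈ G.ancestors r u)
    rw [Finset.card_univ, hG.card_eq_betheBranchSize] at h
    rw [← h]
    push_cast
    ring
  rw [hG.1.wienerIndex_eq_sum_mul r]
  push_cast
  simp_rw [hcompl, hG.card_descendants]
  rw [hG.sum_comp_dist (fun i => (betheBranchSize k ds i : ℚ) * (betheBranchSize k ds 0 -
    betheBranchSize k ds i)), Finset.sum_range_succ']
  simp [mul_assoc]

end IsGeneralizedBetheTree

theorem sum_range_pow_sub_eq_mul_geom_sum {R : Type*} [CommSemiring R] (y : R) (k : ℕ) :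
    ∑ j ∈ range k, y ^ (k - j) = y * ∑ j ∈ range k, y ^ j := by
  rw [Finset.mul_sum, ← Finset.sum_range_reflect]
  refine Finset.sum_congr rfl fun j hj => ?_
  rw [← pow_succ']
  congr 1
  have := Finset.mem_range.mp hj
  omega

theorem dendrimer_level_sum_closed_form {K : Type*} [Field K] (d : K) (hd : d ≠ 2) (k : ℕ) :
    ∑ j ∈ range k, d * (d - 1) ^ j * (∑ t ∈ range (k - j), (d - 1) ^ t) *
        (1 + d * ∑ t ∈ range k, (d - 1) ^ t - ∑ t ∈ range (k - j), (d - 1) ^ t) =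
      d / (d - 2) ^ 3 * ((d - 1) ^ (2 * k) * (k * d ^ 2 - 2 * (k + 1) * d + 1)
        + 2 * d * (d - 1) ^ k - 1) := by
  obtain ⟨y, rfl⟩ : ∃ y, d = y + 1 := ⟨d - 1, by ring⟩
  have hy1 : y - 1 ≠ 0 := fun h => hd (by linear_combination h)
  simp only [add_sub_cancel_right, show y + 1 - 2 = y - 1 by ring]
  have hga : (∑ t ∈ range k, y ^ t) * (y - 1) = y ^ k - 1 := geom_sum_mul y k
  have hterm : ∀ j ∈ range k,
      (y - 1) ^ 2 * ((y + 1) * y ^ j * (∑ t ∈ range (k - j), y ^ t) *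
        (1 + (y + 1) * ∑ t ∈ range k, y ^ t - ∑ t ∈ range (k - j), y ^ t)) =
      (y + 1) * ((y ^ k - y ^ j) * (y * y ^ k + y ^ k - 1) - y ^ k * y ^ (k - j) + y ^ k) := by
    intro j hj
    have hs : (∑ t ∈ range (k - j), y ^ t) * (y - 1) = y ^ (k - j) - 1 := geom_sum_mul y (k - j)
    have hja : y ^ j * y ^ (k - j) = y ^ k := by
      rw [← pow_add, Nat.add_sub_cancel' (Finset.mem_range.mp hj).le]
    linear_combination (y + 1) * y ^ j * ((y - 1) + (y + 1) * (∑ t ∈ range k, y ^ t) * (y - 1)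
        - (∑ t ∈ range (k - j), y ^ t) * (y - 1) - y ^ (k - j) + 1) * hs
      + (y + 1) ^ 2 * y ^ j * (y ^ (k - j) - 1) * hga
      + (y + 1) * (y * y ^ k + y ^ k - 1 - y ^ (k - j) + 1) * hja
  have hsum := Finset.sum_congr rfl hterm
  rw [← Finset.mul_sum, ← Finset.mul_sum] at hsum
  simp only [Finset.sum_add_distrib, Finset.sum_sub_distrib, ← Finset.sum_mul, ← Finset.mul_sum,
    sum_range_pow_sub_eq_mul_geom_sum, Finset.sum_const, Finset.card_range, nsmul_eq_mul] at hsum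
  rw [div_mul_eq_mul_div, eq_div_iff (pow_ne_zero 3 hy1), mul_comm 2 k, pow_mul]
  linear_combination (y - 1) * hsum - (y + 1) * (2 * y * y ^ k + y ^ k - 1) * hga

section Dendrimer

variable {k d : ℕ} {ds : ℕ → ℕ}

theorem betheDescendantCount_zero_succ_of_dendrimer (hds1 : ds 1 = d)
    (hdsi : ∀ i, 2 ≤ i → i ≤ k → ds i = d - 1) {j : ℕ} (hj : j < k) :
    betheDescendantCount ds 0 (j + 1) = d * (d - 1) ^ j := by
  rw [betheDescendantCount, Finset.prod_range_succ', zero_add, zero_add, hds1, mul_comm,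
    Finset.prod_congr rfl fun s hs => hdsi _ (by omega) (by simp at hs; omega),
    Finset.prod_const, Finset.card_range]

theorem betheBranchSize_succ_of_dendrimer (hdsi : ∀ i, 2 ≤ i → i ≤ k → ds i = d - 1)
    {j : ℕ} (hj : j < k) :
    betheBranchSize k ds (j + 1) = ∑ t ∈ range (k - j), (d - 1) ^ t := by
  rw [betheBranchSize, show k + 1 - (j + 1) = k - j by omega]
  refine Finset.sum_congr rfl fun t ht => ?_
  rw [Finset.mem_range] at ht
  rw [betheDescendantCount, Finset.prod_congr rfl fun s hs => hdsi _ (by omega)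
    (by simp at hs; omega), Finset.prod_const, Finset.card_range]

theorem betheBranchSize_zero_of_dendrimer (hds1 : ds 1 = d)
    (hdsi : ∀ i, 2 ≤ i → i ≤ k → ds i = d - 1) :
    betheBranchSize k ds 0 = 1 + d * ∑ t ∈ range k, (d - 1) ^ t := by
  rw [betheBranchSize, Nat.sub_zero, Finset.sum_range_succ', Finset.mul_sum, add_comm]
  congr 1
  exact Finset.sum_congr rfl fun j hj =>
    betheDescendantCount_zero_succ_of_dendrimer hds1 hdsi (Finset.mem_range.mp hj)

end Dendrimer

theorem wiener_index_dendrimer_general {V : Type*} [Fintype V] (G : SimpleGraph V)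
    [DecidableRel G.Adj] (r : V) (k d : ℕ) (hd : 3 ≤ d)
    (ds : ℕ → ℕ) (hds1 : ds 1 = d) (hdsi : ∀ i, 2 ≤ i → i ≤ k → ds i = d - 1)
    (hG : IsGeneralizedBetheTree G r k ds) :
    (wienerIndex G : ℚ) =
      (d : ℚ) / ((d : ℚ) - 2) ^ 3 *
        (((d : ℚ) - 1) ^ (2 * k) * ((k : ℚ) * (d : ℚ) ^ 2 - 2 * ((k : ℚ) + 1) * (d : ℚ) + 1)
          + 2 * (d : ℚ) * ((d : ℚ) - 1) ^ k - 1) := by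
  classical
  rw [hG.wienerIndex_eq, betheBranchSize_zero_of_dendrimer hds1 hdsi,
    Finset.sum_congr rfl fun j hj => by
      rw [betheDescendantCount_zero_succ_of_dendrimer hds1 hdsi (Finset.mem_range.mp hj),
        betheBranchSize_succ_of_dendrimer hdsi (Finset.mem_range.mp hj)]]
  push_cast [Nat.cast_sub (by omega : 1 ≤ d)]
  exact dendrimer_level_sum_closed_form (d : ℚ) (by exact_mod_cast (by omega : d ≠ 2)) k

/-- Wiener index of the regular dendrimer tree `T_{k,d}` of `k+1` levels (the generalized Bethe
tree of `k+1` levels whose degree sequence is `d₁ = d` and `dᵢ = d - 1` for `2 ≤ i ≤ k`):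
`W(T_{k,d}) = d/(d-2)³ · [ (d-1)^{2k} (k d² - 2(k+1) d + 1) + 2 d (d-1)^k - 1 ]`. -/
theorem wiener_index_dendrimer {V : Type*} [Fintype V] (G : SimpleGraph V)
    [DecidableRel G.Adj] (r : V) (k d : ℕ) (hk : 1 ≤ k) (hd : 3 ≤ d)
    (ds : ℕ → ℕ) (hds1 : ds 1 = d) (hdsi : ∀ i, 2 ≤ i → i ≤ k → ds i = d - 1)
    (hG : IsGeneralizedBetheTree G r k ds) :
    (wienerIndex G : ℚ) =
      (d : ℚ) / ((d : ℚ) - 2) ^ 3 *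
        (((d : ℚ) - 1) ^ (2 * k) * ((k : ℚ) * (d : ℚ) ^ 2 - 2 * ((k : ℚ) + 1) * (d : ℚ) + 1)
          + 2 * (d : ℚ) * ((d : ℚ) - 1) ^ k - 1) :=
  wiener_index_dendrimer_general G r k d hd ds hds1 hdsi hG
end

section
/- Let T be a tree on n vertices with maximum degree Δ ≥ 3. Then its terminal Wiener index satisfies TW(T) ≥ (n-1)(Δ-1). -/
/-!
In a tree the distance between two vertices is the number of edges separating them. Hence the
sum of distances over ordered pairs of pendent vertices is `∑ₑ 2 |Aₑ| |Bₑ|`, where `Aₑ` and `Bₑ`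
are the pendent vertices on the two sides of the edge `e`. Each side contains a pendent vertex
(the far end of a longest path leaving `e` on that side), and `|Aₑ| + |Bₑ|` is the number of
pendent vertices, which is at least `Δ` (each neighbour of a vertex of maximum degree leads to
its own pendent vertex). So `|Aₑ| |Bₑ| ≥ |Aₑ| + |Bₑ| - 1 ≥ Δ - 1` for each of the `n - 1` edges.
-/

open Finset

lemma Finset.card_filter_product_not_iff {α : Type*} (s : Finset α) (P : α → Prop)
    [DecidablePred P] :
    #{x ∈ s ×ˢ s | ¬(P x.1 ↔ P x.2)} = 2 * (#{x ∈ s | P x} * #{x ∈ s | ¬P x}) := by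
  classical
  have hdisj :
      Disjoint ({x ∈ s | P x} ×ˢ {x ∈ s | ¬P x}) ({x ∈ s | ¬P x} ×ˢ {x ∈ s | P x}) :=
    disjoint_left.mpr fun x hx hx' =>
      (mem_filter.mp (mem_product.mp hx').1).2 (mem_filter.mp (mem_product.mp hx).1).2
  calc #{x ∈ s ×ˢ s | ¬(P x.1 ↔ P x.2)}
      = #({x ∈ s | P x} ×ˢ {x ∈ s | ¬P x} ∪ {x ∈ s | ¬P x} ×ˢ {x ∈ s | P x}) := by
        congr 1; ext x; simp only [mem_filter, mem_product, mem_union]; tauto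
    _ = 2 * (#{x ∈ s | P x} * #{x ∈ s | ¬P x}) := by
        rw [card_union_of_disjoint hdisj, card_product, card_product]; ring

lemma Finset.card_sub_one_le_card_filter_mul_card_filter_not {α : Type*} {s : Finset α}
    {P : α → Prop} [DecidablePred P] {a b : α} (ha : a ∈ s) (hPa : P a) (hb : b ∈ s)
    (hPb : ¬P b) :
    #s - 1 ≤ #{x ∈ s | P x} * #{x ∈ s | ¬P x} := by
  have hA : #{x ∈ s | P x} ≠ 0 := (card_pos.mpr ⟨a, mem_filter.mpr ⟨ha, hPa⟩⟩).ne'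
  have hB : #{x ∈ s | ¬P x} ≠ 0 := (card_pos.mpr ⟨b, mem_filter.mpr ⟨hb, hPb⟩⟩).ne'
  obtain ⟨m, hm⟩ := Nat.exists_eq_add_one_of_ne_zero hA
  obtain ⟨n, hn⟩ := Nat.exists_eq_add_one_of_ne_zero hB
  rw [← card_filter_add_card_filter_not (s := s) (fun x => P x), hm, hn, add_mul, mul_add]
  omega

namespace SimpleGraph

variable {V : Type*} {G : SimpleGraph V}

def Separates (G : SimpleGraph V) (e : Sym2 V) (u v : V) : Prop :=
  ¬ (G.deleteEdges {e}).Reachable u v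

lemma Walk.reachable_deleteEdges_or {a : V} (b : V) {w : V} (p : G.Walk w a) :
    (G.deleteEdges {s(a, b)}).Reachable w a ∨ (G.deleteEdges {s(a, b)}).Reachable w b := by
  induction p with
  | nil => exact .inl .rfl
  | @cons w x a hwx _ ih =>
    by_cases he : s(w, x) = s(a, b)
    · rcases Sym2.eq_iff.mp he with ⟨rfl, -⟩ | ⟨rfl, -⟩
      · exact .inl .rfl
      · exact .inr .rfl
    · have hwx' : (G.deleteEdges {s(a, b)}).Reachable w x :=
        (deleteEdges_adj.mpr ⟨hwx, he⟩).reachable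
      exact ih.imp hwx'.trans hwx'.trans

lemma IsAcyclic.separates_of_mem_edges (hG : G.IsAcyclic) {e : Sym2 V} {u v : V}
    {p : G.Walk u v} (hp : p.IsPath) (he : e ∈ p.edges) : G.Separates e u v := by
  induction p with
  | nil => simp at he
  | @cons u x v hux q ih =>
    rw [Walk.cons_isPath_iff] at hp
    have hq : s(u, x) ∉ q.edges := fun h => hp.2 (q.fst_mem_support_of_mem_edges h)
    have hbridge : ¬ (G.deleteEdges {s(u, x)}).Reachable u x :=
      isBridge_iff.mp (isAcyclic_iff_forall_adj_isBridge.mp hG hux)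
    rw [Walk.edges_cons, List.mem_cons] at he
    rcases he with rfl | he
    · exact fun huv => hbridge (huv.trans (q.toDeleteEdge _ hq).reachable.symm)
    · have hne : e ≠ s(u, x) := by rintro rfl; exact hq he
      have hux' : (G.deleteEdges {e}).Reachable u x :=
        (deleteEdges_adj.mpr ⟨hux, by simpa [eq_comm] using hne⟩).reachable
      exact fun huv => ih hp.1 he (hux'.symm.trans huv)

lemma IsAcyclic.separates_iff_mem_edges (hG : G.IsAcyclic) {e : Sym2 V} {u v : V}
    {p : G.Walk u v} (hp : p.IsPath) : G.Separates e u v ↔ e ∈ p.edges :=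
  ⟨p.mem_edges_of_not_reachable_deleteEdges, hG.separates_of_mem_edges hp⟩

open scoped Classical in
lemma IsTree.dist_eq_card_separates [Fintype V] [DecidableRel G.Adj] (hG : G.IsTree) (u v : V) :
    G.dist u v = #{e ∈ G.edgeFinset | G.Separates e u v} := by
  obtain ⟨p, hp, hpl⟩ := hG.connected.exists_path_of_dist u v
  have hfilter : {e ∈ G.edgeFinset | G.Separates e u v} = p.edges.toFinset := by
    ext e
    simp only [mem_filter, mem_edgeFinset, List.mem_toFinset,
      hG.isAcyclic.separates_iff_mem_edges hp]
    exact and_iff_right_of_imp fun he => p.edges_subset_edgeSet he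
  rw [hfilter, List.toFinset_card_of_nodup hp.edges_nodup, Walk.length_edges, hpl]

lemma IsTree.separates_iff (hG : G.IsTree) {a b : V} (hab : G.Adj a b) (u v : V) :
    G.Separates s(a, b) u v ↔
      ¬((G.deleteEdges {s(a, b)}).Reachable a u ↔ (G.deleteEdges {s(a, b)}).Reachable a v) := by
  have hbridge : ¬ (G.deleteEdges {s(a, b)}).Reachable a b :=
    isBridge_iff.mp (isAcyclic_iff_forall_adj_isBridge.mp hG.isAcyclic hab)
  have hside (w : V) :
      (G.deleteEdges {s(a, b)}).Reachable a w ∨ (G.deleteEdges {s(a, b)}).Reachable b w :=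
    (((hG.connected w a).some.reachable_deleteEdges_or b).imp (·.symm) (·.symm))
  rw [Separates, not_iff_not]
  refine ⟨fun huv => ⟨fun h => h.trans huv, fun h => h.trans huv.symm⟩, fun h => ?_⟩
  rcases hside u with hu | hu
  · exact hu.symm.trans (h.mp hu)
  · exact hu.symm.trans <| (hside v).resolve_left fun hv => hbridge ((h.mpr hv).trans hu.symm)

lemma IsAcyclic.exists_degree_eq_one_reachable_deleteEdges [Fintype V] [DecidableRel G.Adj]
    (hG : G.IsAcyclic) {a b : V} (hab : G.Adj a b) :
    ∃ w, G.degree w = 1 ∧ (G.deleteEdges {s(a, b)}).Reachable a w := by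
  -- `w` is the far end of a longest path starting with the edge from `b` to `a`
  let lengths : Set ℕ :=
    {n | ∃ (v : V) (q : G.Walk a v), q.IsPath ∧ b ∉ q.support ∧ q.length = n}
  have hne : lengths.Nonempty := ⟨0, a, .nil, .nil, by simpa using hab.ne', rfl⟩
  have hbdd : BddAbove lengths :=
    ⟨Fintype.card V, by rintro _ ⟨v, q, hq, -, rfl⟩; exact hq.length_lt.le⟩
  obtain ⟨v, q, hq, hbq, hlen⟩ := Nat.sSup_mem hne hbdd
  have hp : (Walk.cons hab.symm q).IsPath := hq.cons hbq
  refine ⟨v, degree_eq_one_iff_existsUnique_adj.mpr ⟨(Walk.cons hab.symm q).penultimate,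
    ((Walk.cons hab.symm q).adj_penultimate Walk.not_nil_cons).symm, fun w hvw => ?_⟩,
    (q.toDeleteEdge _ fun h => hbq (q.snd_mem_support_of_mem_edges h)).reachable⟩
  by_contra hw
  have hwp : w ∉ (Walk.cons hab.symm q).support :=
    fun h => hw (hG.eq_penultimate_of_adj_end hp hvw h)
  have hwq : w ∉ q.support ∧ w ≠ b := by simpa [not_or, and_comm, eq_comm] using hwp
  have := le_csSup hbdd ⟨w, q.concat hvw, hq.concat hwq.1 hvw, by simp [hbq, hwq.2.symm], rfl⟩
  simp only [Walk.length_concat] at this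
  omega

lemma IsTree.maxDegree_le_card_pendentFinset [Fintype V] [DecidableRel G.Adj] (hG : G.IsTree) :
    G.maxDegree ≤ #(pendentFinset G) := by
  have := hG.connected.nonempty
  obtain ⟨c, hc⟩ := G.exists_maximal_degree_vertex
  have hleaf (x : V) : ∃ w, x ∈ G.neighborFinset c →
      G.degree w = 1 ∧ (G.deleteEdges {s(x, c)}).Reachable x w := by
    by_cases hx : x ∈ G.neighborFinset c
    · obtain ⟨w, hw⟩ :=
        hG.isAcyclic.exists_degree_eq_one_reachable_deleteEdges
          ((mem_neighborFinset _ _ _).mp hx).symm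
      exact ⟨w, fun _ => hw⟩
    · exact ⟨c, fun h => absurd h hx⟩
  choose leaf hleaf using hleaf
  have hpenultimate {x w : V} (hx : x ∈ G.neighborFinset c) (hw : leaf x = w) {p : G.Walk w c}
      (hp : p.IsPath) : x = p.penultimate := by
    subst hw
    have hxc : G.Adj c x := (mem_neighborFinset _ _ _).mp hx
    have hsep : G.Separates s(x, c) (leaf x) c := fun hwc =>
      isBridge_iff.mp (isAcyclic_iff_forall_adj_isBridge.mp hG.isAcyclic hxc.symm)
        ((hleaf x hx).2.trans hwc)
    exact hG.isAcyclic.eq_penultimate_of_adj_end hp hxc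
      (p.fst_mem_support_of_mem_edges ((hG.isAcyclic.separates_iff_mem_edges hp).mp hsep))
  rw [hc, ← card_neighborFinset_eq_degree]
  refine card_le_card_of_injOn leaf (fun x hx => by simpa [pendentFinset] using (hleaf x hx).1)
    fun x hx y hy hxy => ?_
  obtain ⟨p, hp⟩ := hG.connected.exists_isPath (leaf x) c
  exact (hpenultimate hx rfl hp).trans (hpenultimate hy hxy.symm hp).symm

open scoped Classical in
lemma IsTree.two_mul_maxDegree_sub_one_le_card_separates [Fintype V] [DecidableRel G.Adj]
    (hG : G.IsTree) {e : Sym2 V} (he : e ∈ G.edgeFinset) :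
    2 * (G.maxDegree - 1) ≤
      #{x ∈ pendentFinset G ×ˢ pendentFinset G | G.Separates e x.1 x.2} := by
  induction e using Sym2.ind with | _ a b =>
  have hab : G.Adj a b := mem_edgeFinset.mp he
  rw [filter_congr fun x _ => hG.separates_iff hab x.1 x.2, card_filter_product_not_iff]
  obtain ⟨wa, hwa, hsa⟩ := hG.isAcyclic.exists_degree_eq_one_reachable_deleteEdges hab
  obtain ⟨wb, hwb, hsb⟩ := hG.isAcyclic.exists_degree_eq_one_reachable_deleteEdges hab.symm
  rw [Sym2.eq_swap] at hsb
  have hbridge := isBridge_iff.mp (isAcyclic_iff_forall_adj_isBridge.mp hG.isAcyclic hab)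
  have hleaves := card_sub_one_le_card_filter_mul_card_filter_not
    (s := pendentFinset G) (P := (G.deleteEdges {s(a, b)}).Reachable a)
    (by simpa [pendentFinset] using hwa) hsa (by simpa [pendentFinset] using hwb)
    fun hab' => hbridge (hab'.trans hsb.symm)
  have hΔ := hG.maxDegree_le_card_pendentFinset
  omega

open scoped Classical in
lemma IsTree.sum_dist_pendentFinset_eq_sum_card_separates [Fintype V] [DecidableRel G.Adj]
    (hG : G.IsTree) :
    ∑ u ∈ pendentFinset G, ∑ v ∈ pendentFinset G, G.dist u v =
      ∑ e ∈ G.edgeFinset,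
        #{x ∈ pendentFinset G ×ˢ pendentFinset G | G.Separates e x.1 x.2} := by
  simp_rw [hG.dist_eq_card_separates, ← sum_product']
  exact sum_card_bipartiteAbove_eq_sum_card_bipartiteBelow
    (fun (x : V × V) e => G.Separates e x.1 x.2)

end SimpleGraph

theorem terminal_wiener_index_ge_general {V : Type*} [Fintype V] (T : SimpleGraph V)
    [DecidableRel T.Adj] (hT : T.IsTree) :
    (Fintype.card V - 1) * (T.maxDegree - 1) ≤ terminalWienerIndex T := by
  classical
  have hcard := hT.card_edgeFinset
  rw [terminalWienerIndex, Nat.le_div_iff_mul_le two_pos,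
    hT.sum_dist_pendentFinset_eq_sum_card_separates]
  calc (Fintype.card V - 1) * (T.maxDegree - 1) * 2
      = ∑ _e ∈ T.edgeFinset, 2 * (T.maxDegree - 1) := by
        rw [sum_const, smul_eq_mul, ← hcard, Nat.add_sub_cancel]; ring
    _ ≤ _ := sum_le_sum fun e he => hT.two_mul_maxDegree_sub_one_le_card_separates he

/-- If `T` is a tree on `n` vertices with maximum degree `Δ ≥ 3`, then
`TW(T) ≥ (n - 1)(Δ - 1)`. -/
theorem terminal_wiener_index_ge {V : Type*} [Fintype V] (T : SimpleGraph V)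
    [DecidableRel T.Adj] (hT : T.IsTree) (hΔ : 3 ≤ T.maxDegree) :
    (Fintype.card V - 1) * (T.maxDegree - 1) ≤ terminalWienerIndex T :=
  terminal_wiener_index_ge_general T hT
end
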